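/- arXiv:2003.02331 — 2 statements merged into one kernel-verified Lean document; each statement's English description precedes it below -/
import Mathlib

section
/- Let (μ_n) be a sequence of finite (signed) Borel measures on a metric space E converging narrowly to a finite signed measure μ (i.e., ∫η dμ_n → ∫η dμ for every bounded continuous η), and suppose additionally that |μ_n|(E) → |μ|(E). Then |μ_n| → |μ| narrowly. -/
/-!
For `η ≥ 0` bounded continuous, `∫ η d|μ|` is the supremum of `∫ ψ dμ` over bounded continuous
`ψ` with `|ψ| ≤ η`: writing `|μ| = s • μ` with a Hahn sign `s`, the function `η * s` is approximated
in `L¹(|μ|)` by continuous functions, which may be clamped into `[-η, η]`. Since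
`∫ ψ dμₙ ≤ ∫ η d|μₙ|` for such `ψ`, narrow convergence gives `∫ η d|μ| ≤ liminf ∫ η d|μₙ|`.
Applied to `‖η‖ ± η`, whose integrals differ from `± ∫ η` by `‖η‖` times the total masses,
which converge, this yields both halves of the convergence of `∫ η d|μₙ|`.
-/

open MeasureTheory Filter Topology

/-- Integral of a function against a finite signed measure, via the Jordan decomposition. -/
noncomputable def sint {E : Type*} [MeasurableSpace E] (ν : SignedMeasure E) (η : E → ℝ) : ℝ :=
  (∫ x, η x ∂ν.toJordanDecomposition.posPart) - ∫ x, η x ∂ν.toJordanDecomposition.negPart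

open scoped BoundedContinuousFunction

theorem abs_sub_max_min_le {α : Type*} [AddCommGroup α] [LinearOrder α] [IsOrderedAddMonoid α]
    {a b c : α} (hb : |b| ≤ c) : |b - max (min a c) (-c)| ≤ |b - a| := by
  obtain ⟨hcb, hbc⟩ := abs_le.1 hb
  calc |b - max (min a c) (-c)| = |max (min a c) (-c) - max (min b c) (-c)| := by
        rw [min_eq_left hbc, max_eq_left hcb, abs_sub_comm]
    _ ≤ |min a c - min b c| := abs_max_sub_max_le_abs _ _ _
    _ ≤ |b - a| := by simpa [abs_sub_comm] using abs_min_sub_min_le_max a c b c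

section

variable {E : Type*} [MeasurableSpace E]

theorem exists_sint_eq_integral_mul_sign (ν : SignedMeasure E) :
    ∃ s : E → ℝ, Measurable s ∧ (∀ x, |s x| = 1) ∧ ∀ f : E → ℝ,
      Integrable f ν.totalVariation → sint ν f = ∫ x, f x * s x ∂ν.totalVariation := by
  classical
  obtain ⟨S, hS, hpos, hneg⟩ := ν.toJordanDecomposition.mutuallySingular
  set s : E → ℝ := fun x => if x ∈ S then -1 else 1
  have hs : Measurable s := .ite hS measurable_const measurable_const
  have habs : ∀ x, |s x| = 1 := fun x => by by_cases hx : x ∈ S <;> simp [s, hx]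
  refine ⟨s, hs, habs, fun f hf => ?_⟩
  have hpos_ae : ∀ᵐ x ∂ν.toJordanDecomposition.posPart, f x * s x = f x := by
    filter_upwards [measure_eq_zero_iff_ae_notMem.1 hpos] with x hx
    simp [s, hx]
  have hneg_ae : ∀ᵐ x ∂ν.toJordanDecomposition.negPart, f x * s x = -f x := by
    filter_upwards [measure_eq_zero_iff_ae_notMem.1 hneg] with x hx
    simp [s, not_not.1 hx]
  have hfs : Integrable (fun x => f x * s x) ν.totalVariation :=
    hf.mul_bdd hs.aestronglyMeasurable (ae_of_all _ fun x => (habs x).le)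
  rw [SignedMeasure.totalVariation] at hfs ⊢
  rw [integral_add_measure hfs.left_of_add_measure hfs.right_of_add_measure,
    integral_congr_ae hpos_ae, integral_congr_ae hneg_ae, integral_neg, sint, sub_eq_add_neg]

theorem abs_sint_le_integral_abs (ν : SignedMeasure E) {f : E → ℝ}
    (hf : Integrable f ν.totalVariation) : |sint ν f| ≤ ∫ x, |f x| ∂ν.totalVariation := by
  obtain ⟨s, -, habs, hsint⟩ := exists_sint_eq_integral_mul_sign ν
  rw [hsint f hf]
  simpa [abs_mul, habs] using abs_integral_le_integral_abs (f := fun x => f x * s x)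

variable [PseudoMetricSpace E] [BorelSpace E]

theorem exists_sint_ge_integral_totalVariation_sub (ν : SignedMeasure E) {η : E →ᵇ ℝ}
    (hη : ∀ x, 0 ≤ η x) {ε : ℝ} (hε : 0 < ε) :
    ∃ ψ : E →ᵇ ℝ, (∀ x, |ψ x| ≤ η x) ∧ ∫ x, η x ∂ν.totalVariation - ε ≤ sint ν ψ := by
  obtain ⟨s, hs, habs, hsint⟩ := exists_sint_eq_integral_mul_sign ν
  have hs_bdd : ∀ᵐ x ∂ν.totalVariation, ‖s x‖ ≤ 1 := ae_of_all _ fun x => (habs x).le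
  have hf_le : ∀ x, |η x * s x| ≤ η x := fun x => by
    rw [abs_mul, habs, mul_one, abs_of_nonneg (hη x)]
  have hf : Integrable (fun x => η x * s x) ν.totalVariation :=
    (η.integrable _).mul_bdd hs.aestronglyMeasurable hs_bdd
  obtain ⟨ψ₀, hψ₀, -⟩ := hf.exists_boundedContinuous_integral_sub_le hε
  -- clamping `ψ₀` into `[-η, η]` only brings it closer to `η * s`
  set ψ : E →ᵇ ℝ := ψ₀ ⊓ η ⊔ -η
  have hψ_apply : ∀ x, ψ x = max (min (ψ₀ x) (η x)) (-η x) := fun _ => rfl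
  have hψ_le : ∀ x, |ψ x| ≤ η x := fun x => by
    rw [hψ_apply, abs_le]
    exact ⟨le_max_right _ _, max_le (min_le_right _ _) (by linarith [hη x])⟩
  refine ⟨ψ, hψ_le, ?_⟩
  have hψ : Integrable ψ ν.totalVariation := ψ.integrable _
  have : ∫ x, η x ∂ν.totalVariation - sint ν ψ ≤ ε := calc
    _ = ∫ x, (η x * s x - ψ x) * s x ∂ν.totalVariation := by
      rw [hsint _ hψ, ← integral_sub (η.integrable _) (hψ.mul_bdd hs.aestronglyMeasurable hs_bdd)]
      congr 1 with x
      rw [sub_mul, mul_assoc, ← sq, ← sq_abs, habs, one_pow, mul_one]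
    _ ≤ ∫ x, ‖η x * s x - ψ₀ x‖ ∂ν.totalVariation := by
      refine (Real.le_norm_self _).trans (norm_integral_le_of_norm_le (hf.sub (ψ₀.integrable _)).norm
        (ae_of_all _ fun x => ?_))
      rw [Real.norm_eq_abs, Real.norm_eq_abs, abs_mul, habs, mul_one, hψ_apply]
      exact abs_sub_max_min_le (hf_le x)
    _ ≤ ε := hψ₀
  linarith

theorem eventually_integral_totalVariation_sub_le {ι : Type*} {l : Filter ι}
    {μs : ι → SignedMeasure E} {μ : SignedMeasure E}
    (hnarrow : ∀ η : E →ᵇ ℝ, Tendsto (fun i => sint (μs i) η) l (𝓝 (sint μ η)))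
    {η : E →ᵇ ℝ} (hη : ∀ x, 0 ≤ η x) {ε : ℝ} (hε : 0 < ε) :
    ∀ᶠ i in l, ∫ x, η x ∂μ.totalVariation - ε ≤ ∫ x, η x ∂(μs i).totalVariation := by
  obtain ⟨ψ, hψ_le, hψ⟩ := exists_sint_ge_integral_totalVariation_sub μ hη (half_pos hε)
  filter_upwards [(hnarrow ψ).eventually (eventually_ge_nhds (sub_lt_self _ (half_pos hε)))]
    with i hi
  have : sint (μs i) ψ ≤ ∫ x, η x ∂(μs i).totalVariation := calc
    _ ≤ |sint (μs i) ψ| := le_abs_self _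
    _ ≤ ∫ x, |ψ x| ∂(μs i).totalVariation := abs_sint_le_integral_abs _ (ψ.integrable _)
    _ ≤ ∫ x, η x ∂(μs i).totalVariation :=
      integral_mono (ψ.integrable _).abs (η.integrable _) hψ_le
  linarith

end

theorem stmt3 {E : Type*} [MetricSpace E] [MeasurableSpace E] [BorelSpace E]
    (μn : ℕ → SignedMeasure E) (μ : SignedMeasure E)
    (hnarrow : ∀ η : BoundedContinuousFunction E ℝ,
      Tendsto (fun n => sint (μn n) η) atTop (𝓝 (sint μ η)))
    (htv : Tendsto (fun n => ((μn n).totalVariation Set.univ).toReal) atTop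
      (𝓝 ((μ.totalVariation Set.univ).toReal))) :
    ∀ η : BoundedContinuousFunction E ℝ,
      Tendsto (fun n => ∫ x, η x ∂(μn n).totalVariation) atTop
        (𝓝 (∫ x, η x ∂μ.totalVariation)) := by
  intro η
  set c := ‖η‖
  have hc : ∀ x, |η x| ≤ c := η.norm_coe_le_norm
  have integral_const_add (ν : SignedMeasure E) :
      ∫ x, (.const E c + η) x ∂ν.totalVariation
        = c * (ν.totalVariation Set.univ).toReal + ∫ x, η x ∂ν.totalVariation := by
    simp [integral_add (integrable_const c) (η.integrable _), measureReal_def, mul_comm]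
  have integral_const_sub (ν : SignedMeasure E) :
      ∫ x, (.const E c - η) x ∂ν.totalVariation
        = c * (ν.totalVariation Set.univ).toReal - ∫ x, η x ∂ν.totalVariation := by
    simp [integral_sub (integrable_const c) (η.integrable _), measureReal_def, mul_comm]
  rw [Metric.tendsto_nhds]
  intro ε hε
  have hε4 : 0 < ε / 4 := by positivity
  have lower := eventually_integral_totalVariation_sub_le hnarrow (η := .const E c + η)
    (fun x => by simpa using neg_le_iff_add_nonneg'.1 (neg_le_of_abs_le (hc x))) hε4
  have upper := eventually_integral_totalVariation_sub_le hnarrow (η := .const E c - η)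
    (fun x => by simpa using le_of_abs_le (hc x)) hε4
  filter_upwards [lower, upper, Metric.tendsto_nhds.1 (htv.const_mul c) _ hε4]
    with n h_lower h_upper h_mass
  rw [integral_const_add, integral_const_add] at h_lower
  rw [integral_const_sub, integral_const_sub] at h_upper
  rw [Real.dist_eq, abs_lt] at h_mass ⊢
  constructor <;> linarith
end

section
/- Let E be a locally compact separable metric space and (ν_k), μ be finite signed Borel measures on E. Suppose ν_k = σ_k + ρ_k − τ_k where ‖σ_k‖_TV → 0, ρ_k → μ⁺ narrowly, and τ_k → μ⁻ narrowly, with ρ_k, τ_k positive finite measures. Then ν_k → μ narrowly and limsup_k |ν_k|(E) ≤ |μ|(E); if moreover μ⁺ ⊥ μ⁻, then |ν_k|(E) → |μ|(E). -/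
open MeasureTheory Filter Topology

/-!
Write `ν_k = (σ_k⁺ + ρ_k) - (σ_k⁻ + τ_k)`. Minimality of the Jordan decomposition bounds
`|ν_k|(E)` by `|σ_k|(E) + ρ_k(E) + τ_k(E)`, and testing against `1` shows that this bound tends to
`μ⁺(E) + μ⁻(E) = |μ|(E)`; together with `∫ η dσ_k → 0` this gives narrow convergence and the
`limsup` bound. Conversely, as `μ⁺ ⊥ μ⁻`, outer regularity and Urysohn's lemma give for every
`ε > 0` a continuous `η` with `|η| ≤ 1`, equal to `1` outside a `μ⁺`-small open set and to `-1`
outside a `μ⁻`-small one, so that `∫ η dμ ≥ |μ|(E) - ε`; since `∫ η dν_k ≤ |ν_k|(E)`, narrow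
convergence yields `|μ|(E) ≤ liminf |ν_k|(E)`.
-/

open Set BoundedContinuousFunction
open scoped ENNReal

namespace MeasureTheory

variable {E : Type*} [MeasurableSpace E]

theorem Measure.le_of_add_eq_add_of_mutuallySingular {p q a b : Measure E} (hpq : p ⟂ₘ q)
    (h : p + b = q + a) : p ≤ a := by
  obtain ⟨S, -, hpS, hqS⟩ := hpq
  refine Measure.le_iff'.2 fun s => ?_
  calc p s = p (s ∩ Sᶜ) := (measure_inter_conull (by rwa [compl_compl])).symm
    _ ≤ (p + b) (s ∩ Sᶜ) := Measure.le_add_right le_rfl _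
    _ = q (s ∩ Sᶜ) + a (s ∩ Sᶜ) := by rw [h, Measure.add_apply]
    _ = a (s ∩ Sᶜ) := by rw [measure_mono_null inter_subset_right hqS, zero_add]
    _ ≤ a s := measure_mono inter_subset_left

theorem measureReal_univ_sub_le_integral {m : Measure E} [IsFiniteMeasure m] {f : E → ℝ}
    {s : Set E} (hs : MeasurableSet s) (hf : Integrable f m) (hf_ge : ∀ x, -1 ≤ f x)
    (hf_one : ∀ x ∉ s, f x = 1) : m.real univ - 2 * m.real s ≤ ∫ x, f x ∂m := by
  have hle : ∀ x, 1 - f x ≤ s.indicator (fun _ => (2 : ℝ)) x := fun x => by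
    by_cases hx : x ∈ s
    · simp only [indicator_of_mem hx]; linarith [hf_ge x]
    · simp [indicator_of_notMem hx, hf_one x hx]
  have hdefect : ∫ x, (1 - f x) ∂m ≤ 2 * m.real s :=
    calc ∫ x, (1 - f x) ∂m ≤ ∫ x, s.indicator (fun _ => (2 : ℝ)) x ∂m :=
          integral_mono ((integrable_const 1).sub hf) ((integrable_const 2).indicator hs) hle
      _ = 2 * m.real s := by rw [integral_indicator_const _ hs, smul_eq_mul, mul_comm]
  rw [integral_sub (integrable_const 1) hf, integral_const, smul_eq_mul, mul_one] at hdefect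
  linarith

theorem Measure.exists_norm_le_one_le_integral_sub_integral [TopologicalSpace E]
    [NormalSpace E] [OpensMeasurableSpace E] {p q : Measure E} [IsFiniteMeasure p]
    [IsFiniteMeasure q] [p.OuterRegular] [q.OuterRegular] (hpq : p ⟂ₘ q) {ε : ℝ} (hε : 0 < ε) :
    ∃ η : E →ᵇ ℝ, ‖η‖ ≤ 1 ∧ p.real univ + q.real univ - ε ≤ ∫ x, η x ∂p - ∫ x, η x ∂q := by
  obtain ⟨S, -, hpS, hqS⟩ := hpq
  have hε' : (0 : ℝ≥0∞) < ENNReal.ofReal (ε / 4) := ENNReal.ofReal_pos.2 (by positivity)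
  obtain ⟨U, hSU, hUo, hqU⟩ := Set.exists_isOpen_lt_of_lt (μ := q) Sᶜ _ (hqS ▸ hε')
  obtain ⟨V, hSV, hVo, hpV⟩ := Set.exists_isOpen_lt_of_lt (μ := p) S _ (hpS ▸ hε')
  have hUV : Disjoint Uᶜ Vᶜ := by
    rw [disjoint_compl_left_iff_subset]
    exact (compl_subset_compl.2 hSV).trans hSU
  obtain ⟨η, hηU, hηV, hη⟩ := exists_bounded_mem_Icc_of_closed_of_le hUo.isClosed_compl
    hVo.isClosed_compl hUV (by norm_num : (-1 : ℝ) ≤ 1)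
  refine ⟨η, (η.norm_le zero_le_one).2 fun x => abs_le.2 (hη x), ?_⟩
  have hp := measureReal_univ_sub_le_integral hVo.measurableSet (η.integrable p)
    (fun x => (hη x).1) fun x hx => hηV hx
  have hq := measureReal_univ_sub_le_integral hUo.measurableSet ((-η).integrable q)
    (fun x => by simpa using (hη x).2) fun x hx => by simp [hηU hx]
  have hpV' : p.real V < ε / 4 := ENNReal.toReal_lt_of_lt_ofReal hpV
  have hqU' : q.real U < ε / 4 := ENNReal.toReal_lt_of_lt_ofReal hqU
  simp only [BoundedContinuousFunction.coe_neg, Pi.neg_apply, integral_neg] at hq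
  linarith

namespace SignedMeasure

variable {ν σ : SignedMeasure E} {a b : Measure E} [IsFiniteMeasure a] [IsFiniteMeasure b]

theorem posPart_add_eq_negPart_add_of_eq_sub (h : ν = a.toSignedMeasure - b.toSignedMeasure) :
    ν.toJordanDecomposition.posPart + b = ν.toJordanDecomposition.negPart + a := by
  rw [← Measure.toSignedMeasure_eq_toSignedMeasure_iff, Measure.toSignedMeasure_add,
    Measure.toSignedMeasure_add, add_comm _ a.toSignedMeasure, ← sub_eq_sub_iff_add_eq_add, ← h]
  exact ν.toSignedMeasure_toJordanDecomposition

theorem totalVariation_le_of_eq_sub (h : ν = a.toSignedMeasure - b.toSignedMeasure) :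
    ν.totalVariation ≤ a + b :=
  have hab := posPart_add_eq_negPart_add_of_eq_sub h
  have hsing := ν.toJordanDecomposition.mutuallySingular
  add_le_add (Measure.le_of_add_eq_add_of_mutuallySingular hsing hab)
    (Measure.le_of_add_eq_add_of_mutuallySingular hsing.symm hab.symm)

theorem eq_sub_of_eq_add_sub (h : ν = σ + a.toSignedMeasure - b.toSignedMeasure) :
    ν = (σ.toJordanDecomposition.posPart + a).toSignedMeasure -
      (σ.toJordanDecomposition.negPart + b).toSignedMeasure := by
  rw [h, Measure.toSignedMeasure_add, Measure.toSignedMeasure_add]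
  conv_lhs => rw [← σ.toSignedMeasure_toJordanDecomposition, JordanDecomposition.toSignedMeasure]
  abel

theorem totalVariation_le_of_eq_add_sub (h : ν = σ + a.toSignedMeasure - b.toSignedMeasure) :
    ν.totalVariation ≤ σ.totalVariation + (a + b) :=
  (totalVariation_le_of_eq_sub (eq_sub_of_eq_add_sub h)).trans_eq <| by
    rw [totalVariation]; abel

theorem totalVariation_real_le_of_eq_add_sub
    (h : ν = σ + a.toSignedMeasure - b.toSignedMeasure) (s : Set E) :
    ν.totalVariation.real s ≤ σ.totalVariation.real s + (a.real s + b.real s) := by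
  rw [← measureReal_add_apply, ← measureReal_add_apply]
  exact ENNReal.toReal_mono (measure_ne_top _ _)
    (Measure.le_iff'.1 (totalVariation_le_of_eq_add_sub h) s)

end SignedMeasure

end MeasureTheory

section Sint

variable {E : Type*} [MeasurableSpace E] [TopologicalSpace E]

theorem abs_sint_le (ν : SignedMeasure E) (η : E →ᵇ ℝ) :
    |sint ν η| ≤ ‖η‖ * ν.totalVariation.real univ := by
  have hbound (m : Measure E) [IsFiniteMeasure m] : ‖∫ x, η x ∂m‖ ≤ ‖η‖ * m.real univ :=
    norm_integral_le_of_norm_le_const (Eventually.of_forall η.norm_coe_le_norm)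
  rw [SignedMeasure.totalVariation, measureReal_add_apply, mul_add]
  exact (abs_sub _ _).trans (add_le_add (hbound _) (hbound _))

theorem sint_le_totalVariation {η : E →ᵇ ℝ} (hη : ‖η‖ ≤ 1) (ν : SignedMeasure E) :
    sint ν η ≤ ν.totalVariation.real univ :=
  (le_abs_self _).trans <| (abs_sint_le ν η).trans <|
    mul_le_of_le_one_left measureReal_nonneg hη

theorem tendsto_sint_zero {ι : Type*} {l : Filter ι} {σ : ι → SignedMeasure E}
    (hσ : Tendsto (fun k => (σ k).totalVariation.real univ) l (𝓝 0)) (η : E →ᵇ ℝ) :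
    Tendsto (fun k => sint (σ k) η) l (𝓝 0) :=
  squeeze_zero_norm (fun k => abs_sint_le (σ k) η) (by simpa using hσ.const_mul ‖η‖)

variable [OpensMeasurableSpace E] {ν σ : SignedMeasure E} {a b : Measure E}
  [IsFiniteMeasure a] [IsFiniteMeasure b]

theorem sint_eq_of_eq_sub (h : ν = a.toSignedMeasure - b.toSignedMeasure) (η : E →ᵇ ℝ) :
    sint ν η = ∫ x, η x ∂a - ∫ x, η x ∂b := by
  have hab := congrArg (fun m => ∫ x, η x ∂m)
    (SignedMeasure.posPart_add_eq_negPart_add_of_eq_sub h)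
  simp only [integral_add_measure (η.integrable _) (η.integrable _)] at hab
  rw [sint]
  linarith

theorem sint_eq_of_eq_add_sub (h : ν = σ + a.toSignedMeasure - b.toSignedMeasure)
    (η : E →ᵇ ℝ) : sint ν η = sint σ η + (∫ x, η x ∂a - ∫ x, η x ∂b) := by
  rw [sint_eq_of_eq_sub (SignedMeasure.eq_sub_of_eq_add_sub h),
    integral_add_measure (η.integrable _) (η.integrable _),
    integral_add_measure (η.integrable _) (η.integrable _), sint]
  ring

end Sint

section Metrizable

variable {E : Type*} [MeasurableSpace E] [TopologicalSpace E]
  [TopologicalSpace.PseudoMetrizableSpace E] [BorelSpace E]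

theorem exists_norm_le_one_totalVariation_sub_le_sint (μ : SignedMeasure E) {ε : ℝ}
    (hε : 0 < ε) : ∃ η : E →ᵇ ℝ, ‖η‖ ≤ 1 ∧ μ.totalVariation.real univ - ε ≤ sint μ η := by
  simpa [SignedMeasure.totalVariation, measureReal_add_apply, sint] using
    Measure.exists_norm_le_one_le_integral_sub_integral
      μ.toJordanDecomposition.mutuallySingular hε

theorem totalVariation_le_liminf_of_tendsto_sint {ι : Type*} {l : Filter ι} [l.NeBot]
    {ν : ι → SignedMeasure E} {μ : SignedMeasure E}
    (hν : ∀ η : E →ᵇ ℝ, Tendsto (fun k => sint (ν k) η) l (𝓝 (sint μ η)))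
    (hbdd : IsBoundedUnder (· ≤ ·) l fun k => (ν k).totalVariation.real univ) :
    μ.totalVariation.real univ ≤ liminf (fun k => (ν k).totalVariation.real univ) l := by
  refine le_of_forall_pos_le_add fun ε hε => ?_
  obtain ⟨η, hη, hμη⟩ := exists_norm_le_one_totalVariation_sub_le_sint μ hε
  have hlim : sint μ η ≤ liminf (fun k => (ν k).totalVariation.real univ) l :=
    (hν η).liminf_eq ▸ liminf_le_liminf
      (Eventually.of_forall fun k => sint_le_totalVariation hη _)
      (hν η).isBoundedUnder_ge hbdd.isCoboundedUnder_ge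
  linarith

end Metrizable

theorem stmt14_general {E : Type*} [MetricSpace E]
    [MeasurableSpace E] [BorelSpace E]
    (ν σ : ℕ → SignedMeasure E) (μ : SignedMeasure E)
    (ρ τ : ℕ → Measure E) (hρf : ∀ k, IsFiniteMeasure (ρ k)) (hτf : ∀ k, IsFiniteMeasure (τ k))
    (hdecomp : ∀ k, ν k = σ k + @Measure.toSignedMeasure E _ (ρ k) (hρf k)
      - @Measure.toSignedMeasure E _ (τ k) (hτf k))
    (hσ : Tendsto (fun k => ((σ k).totalVariation Set.univ).toReal) atTop (𝓝 0))
    (hρ : ∀ η : BoundedContinuousFunction E ℝ,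
      Tendsto (fun k => ∫ x, η x ∂ρ k) atTop
        (𝓝 (∫ x, η x ∂μ.toJordanDecomposition.posPart)))
    (hτ : ∀ η : BoundedContinuousFunction E ℝ,
      Tendsto (fun k => ∫ x, η x ∂τ k) atTop
        (𝓝 (∫ x, η x ∂μ.toJordanDecomposition.negPart))) :
    (∀ η : BoundedContinuousFunction E ℝ,
      Tendsto (fun k => sint (ν k) η) atTop (𝓝 (sint μ η))) ∧
    Filter.limsup (fun k => ((ν k).totalVariation Set.univ).toReal) atTop
      ≤ (μ.totalVariation Set.univ).toReal ∧
    (MeasureTheory.Measure.MutuallySingular μ.toJordanDecomposition.posPart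
        μ.toJordanDecomposition.negPart →
      Tendsto (fun k => ((ν k).totalVariation Set.univ).toReal) atTop
        (𝓝 ((μ.totalVariation Set.univ).toReal))) := by
  set g : ℕ → ℝ := fun k => (ν k).totalVariation.real univ
  set B : ℕ → ℝ := fun k => (σ k).totalVariation.real univ + ((ρ k).real univ + (τ k).real univ)
  have hnarrow (η : E →ᵇ ℝ) : Tendsto (fun k => sint (ν k) η) atTop (𝓝 (sint μ η)) := by
    have h := (tendsto_sint_zero hσ η).add ((hρ η).sub (hτ η))
    rw [zero_add] at h
    exact h.congr fun k => (sint_eq_of_eq_add_sub (hdecomp k) η).symm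
  have hgB (k : ℕ) : g k ≤ B k := SignedMeasure.totalVariation_real_le_of_eq_add_sub (hdecomp k) _
  have hB : Tendsto B atTop (𝓝 (μ.totalVariation.real univ)) := by
    convert hσ.add ((hρ 1).add (hτ 1)) using 2
    · simp [B, measureReal_def]
    · simp [SignedMeasure.totalVariation, measureReal_add_apply]
  have hbdd : IsBoundedUnder (· ≤ ·) atTop g :=
    hB.isBoundedUnder_le.mono_le (Eventually.of_forall hgB)
  have hbdd' : IsBoundedUnder (· ≥ ·) atTop g :=
    isBoundedUnder_of_eventually_ge (Eventually.of_forall fun _ => measureReal_nonneg)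
  have hlimsup : limsup g atTop ≤ μ.totalVariation.real univ :=
    (limsup_le_limsup (Eventually.of_forall hgB) hbdd'.isCoboundedUnder_le
      hB.isBoundedUnder_le).trans_eq hB.limsup_eq
  exact ⟨hnarrow, hlimsup, fun _ => tendsto_of_le_liminf_of_limsup_le
    (totalVariation_le_liminf_of_tendsto_sint hnarrow hbdd) hlimsup hbdd hbdd'⟩

theorem stmt14 {E : Type*} [MetricSpace E] [TopologicalSpace.SeparableSpace E]
    [LocallyCompactSpace E] [MeasurableSpace E] [BorelSpace E]
    (ν σ : ℕ → SignedMeasure E) (μ : SignedMeasure E)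
    (ρ τ : ℕ → Measure E) (hρf : ∀ k, IsFiniteMeasure (ρ k)) (hτf : ∀ k, IsFiniteMeasure (τ k))
    (hdecomp : ∀ k, ν k = σ k + @Measure.toSignedMeasure E _ (ρ k) (hρf k)
      - @Measure.toSignedMeasure E _ (τ k) (hτf k))
    (hσ : Tendsto (fun k => ((σ k).totalVariation Set.univ).toReal) atTop (𝓝 0))
    (hρ : ∀ η : BoundedContinuousFunction E ℝ,
      Tendsto (fun k => ∫ x, η x ∂ρ k) atTop
        (𝓝 (∫ x, η x ∂μ.toJordanDecomposition.posPart)))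
    (hτ : ∀ η : BoundedContinuousFunction E ℝ,
      Tendsto (fun k => ∫ x, η x ∂τ k) atTop
        (𝓝 (∫ x, η x ∂μ.toJordanDecomposition.negPart))) :
    (∀ η : BoundedContinuousFunction E ℝ,
      Tendsto (fun k => sint (ν k) η) atTop (𝓝 (sint μ η))) ∧
    Filter.limsup (fun k => ((ν k).totalVariation Set.univ).toReal) atTop
      ≤ (μ.totalVariation Set.univ).toReal ∧
    (MeasureTheory.Measure.MutuallySingular μ.toJordanDecomposition.posPart
        μ.toJordanDecomposition.negPart →
      Tendsto (fun k => ((ν k).totalVariation Set.univ).toReal) atTop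
        (𝓝 ((μ.totalVariation Set.univ).toReal))) :=
  stmt14_general ν σ μ ρ τ hρf hτf hdecomp hσ hρ hτ
end
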